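/- Let $k$ be a field of prime characteristic $p$ and let $H_1$ be the $T$-space of $k_0\langle X\rangle$ generated by $x_1^p$. Then for every $u \in H_1$ and every $v \in k_0\langle X\rangle$, the commutator $[u,v]$ belongs to $H_1$. -/

import Mathlib

open scoped BigOperators

/-- The free non-unital associative algebra over `k` on countably many variables,
realized as the semigroup algebra of the free semigroup on `ℕ`. -/
abbrev FA (k : Type*) [Field k] := MonoidAlgebra k (FreeSemigroup ℕ)

/-- The generator (variable) `x_i`. -/
noncomputable def Xg (k : Type*) [Field k] (i : ℕ) : FA k :=
  MonoidAlgebra.single (FreeSemigroup.of i) 1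

/-- Product of a (nonempty) list in a non-unital semiring; `0` on the empty list. -/
def lprod {A : Type*} [NonUnitalSemiring A] : List A → A
  | [] => 0
  | [a] => a
  | a :: b :: l => a * lprod (b :: l)

/-- `n`-th power in a non-unital semiring (zero for `n = 0`). -/
def npow' {A : Type*} [NonUnitalSemiring A] (a : A) (n : ℕ) : A :=
  lprod (List.replicate n a)

/-- The full multilinear symmetrization `S^{(d)}(y_1,…,y_d) = ∑_{σ ∈ Σ_d} y_{σ(1)} ⋯ y_{σ(d)}`. -/
def Ssym {A : Type*} [NonUnitalSemiring A] (d : ℕ) (y : Fin d → A) : A :=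
  ∑ σ : Equiv.Perm (Fin d), lprod (List.ofFn (fun i => y (σ i)))

/-- A T-space: a subspace closed under all substitution endomorphisms
(non-unital algebra endomorphisms). -/
def IsTSpace (k : Type*) [Field k] (V : Submodule k (FA k)) : Prop :=
  ∀ (φ : FA k →ₙₐ[k] FA k), ∀ v ∈ V, φ v ∈ V

/-- The T-space generated by a set `S`: the span of all substitution instances
of elements of `S`. -/
noncomputable def TSpan (k : Type*) [Field k] (S : Set (FA k)) : Submodule k (FA k) :=
  Submodule.span k {a | ∃ (φ : FA k →ₙₐ[k] FA k) (s : FA k), s ∈ S ∧ a = φ s}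

/-- The set of products `u * v` with `u ∈ U`, `v ∈ V`. -/
def mulSet {k : Type*} [Field k] (U V : Submodule k (FA k)) : Set (FA k) :=
  {a | ∃ u ∈ U, ∃ v ∈ V, a = u * v}

/-- The T-spaces `S_n^{(d)}`: `S_1^{(d)}` is generated by `S^{(d)}(x_1,…,x_d)` and
`S_{n+1}^{(d)} = (S_n^{(d)} S_1^{(d)})^S`. -/
noncomputable def Sn (k : Type*) [Field k] (d : ℕ) : ℕ → Submodule k (FA k)
  | 0 => ⊥
  | 1 => TSpan k {Ssym d (fun i => Xg k i)}
  | (n+2) => TSpan k (mulSet (Sn k d (n+1)) (Sn k d 1))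

/-- The T-spaces `H_n`: `H_1` is generated by `x_1^p` and `H_{n+1} = (H_n H_1)^S`. -/
noncomputable def Hn (k : Type*) [Field k] (p : ℕ) : ℕ → Submodule k (FA k)
  | 0 => ⊥
  | 1 => TSpan k {npow' (Xg k 0) p}
  | (n+2) => TSpan k (mulSet (Hn k p (n+1)) (Hn k p 1))

/-- The word `x_1^p x_2^p ⋯ x_n^p`. -/
noncomputable def hword (k : Type*) [Field k] (p n : ℕ) : FA k :=
  lprod ((List.range n).map (fun t => npow' (Xg k t) p))

/-! For `y = [x, w]` the part of `(x + t y)^p` linear in `t` is `∑ xⁱ y x^(p-1-i) = [x^p, w]`.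
Weighting `(x + z y)^p` by `z^(p-2)` and summing over `z ∈ 𝔽_p`, the power sums
`∑_z z^(p-2+j)` vanish except at `j = 1` and `j = p`, where they are `-1`. Hence
`[x^p, w] = -y^p - ∑_z z^(p-2) (x + z y)^p` is a linear combination of `p`-th powers, and `H_1`
is exactly the span of all `p`-th powers. -/

open Finset

section LProd

variable {A B : Type*} [NonUnitalSemiring A] [NonUnitalSemiring B]

theorem map_lprod {F : Type*} [FunLike F A B] [NonUnitalRingHomClass F A B] (f : F) :
    ∀ l : List A, f (lprod l) = lprod (l.map f)
  | [] => map_zero f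
  | [_] => rfl
  | a :: b :: l => by rw [lprod, map_mul, map_lprod f (b :: l)]; rfl

theorem map_npow' {F : Type*} [FunLike F A B] [NonUnitalRingHomClass F A B] (f : F) (a : A)
    (n : ℕ) : f (npow' a n) = npow' (f a) n := by
  rw [npow', map_lprod, List.map_replicate, npow']

theorem lprod_eq_prod {R : Type*} [Semiring R] : ∀ {l : List R}, l ≠ [] → lprod l = l.prod
  | [a], _ => List.prod_singleton.symm
  | a :: b :: l, _ => by
    rw [lprod, lprod_eq_prod (List.cons_ne_nil b l)]
    simp only [List.prod_cons]

theorem npow'_eq_pow {R : Type*} [Semiring R] (a : R) {n : ℕ} (hn : n ≠ 0) :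
    npow' a n = a ^ n := by
  rw [npow', lprod_eq_prod (by simpa using hn), List.prod_replicate]

end LProd

section AddPowComponent

variable {B : Type*} [Semiring B]

/-- The sum of the words of length `n` in `x, y` containing exactly `j` letters `y`. -/
def addPowComponent (x y : B) : ℕ → ℕ → B
  | 0, 0 => 1
  | 0, _ + 1 => 0
  | n + 1, 0 => x * addPowComponent x y n 0
  | n + 1, j + 1 => x * addPowComponent x y n (j + 1) + y * addPowComponent x y n j

variable (x y : B)

theorem addPowComponent_zero_right (n : ℕ) : addPowComponent x y n 0 = x ^ n := by
  induction n with
  | zero => exact (pow_zero x).symm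
  | succ n ih => rw [addPowComponent, ih, pow_succ']

theorem addPowComponent_of_lt {n j : ℕ} (h : n < j) : addPowComponent x y n j = 0 := by
  induction n generalizing j with
  | zero => obtain ⟨j, rfl⟩ := Nat.exists_eq_succ_of_ne_zero h.ne'; rfl
  | succ n ih =>
    obtain ⟨j, rfl⟩ := Nat.exists_eq_succ_of_ne_zero (Nat.ne_zero_of_lt h)
    rw [addPowComponent, ih (by omega), ih (by omega), mul_zero, mul_zero, add_zero]

theorem addPowComponent_self (n : ℕ) : addPowComponent x y n n = y ^ n := by
  induction n with
  | zero => exact (pow_zero y).symm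
  | succ n ih => rw [addPowComponent, addPowComponent_of_lt x y n.lt_succ_self, ih, mul_zero,
      zero_add, pow_succ']

theorem add_smul_pow_eq_sum {R : Type*} [CommSemiring R] [Algebra R B] (μ : R) (n : ℕ) :
    (x + μ • y) ^ n = ∑ j ∈ range (n + 1), μ ^ j • addPowComponent x y n j := by
  induction n with
  | zero => simp [addPowComponent]
  | succ n ih =>
    have hx : ∑ j ∈ range (n + 1), μ ^ j • (x * addPowComponent x y n j)
        = ∑ j ∈ range (n + 2), μ ^ j • (x * addPowComponent x y n j) := by
      rw [sum_range_succ _ (n + 1), addPowComponent_of_lt x y n.lt_succ_self, mul_zero,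
        smul_zero, add_zero]
    rw [pow_succ', ih, mul_sum, sum_range_succ' _ (n + 1)]
    simp only [addPowComponent, add_mul, smul_mul_assoc, mul_smul_comm, smul_smul, ← pow_succ,
      smul_add, sum_add_distrib]
    rw [hx, sum_range_succ']
    abel

theorem addPowComponent_one_commutator {B : Type*} [Ring B] (x w : B) (n : ℕ) :
    addPowComponent x (x * w - w * x) n 1 = x ^ n * w - w * x ^ n := by
  induction n with
  | zero => simp [addPowComponent]
  | succ n ih =>
    rw [addPowComponent, ih, addPowComponent_zero_right, pow_succ']
    noncomm_ring

end AddPowComponent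

theorem FiniteField.sum_pow_eq_ite {K : Type*} [Field K] [Fintype K] (i : ℕ) :
    ∑ x : K, x ^ i = if i ≠ 0 ∧ Fintype.card K - 1 ∣ i then -1 else 0 := by
  classical
  rcases eq_or_ne i 0 with rfl | hi
  · simp
  have hunits : ∑ x : K, x ^ i = ∑ x : Kˣ, (x ^ i : K) := by
    rw [← Fintype.sum_subtype_add_sum_subtype (· ≠ (0 : K)), ← Equiv.sum_comp unitsEquivNeZero]
    rw [Fintype.sum_eq_zero (fun x : {x : K // ¬x ≠ 0} ↦ (x : K) ^ i)
      fun x ↦ by rw [not_not.mp x.2, zero_pow hi], add_zero]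
    rfl
  rw [hunits, FiniteField.sum_pow_units]
  simp [hi]

theorem ZMod.sum_pow_sub_two_add {p : ℕ} [Fact p.Prime] {j : ℕ} (hj : j ≤ p) :
    ∑ z : ZMod p, z ^ (p - 2 + j) = if j = 1 ∨ j = p then -1 else 0 := by
  have hp := (Fact.out : p.Prime).two_le
  have hdvd : p - 2 + j ≠ 0 ∧ p - 1 ∣ p - 2 + j ↔ j = 1 ∨ j = p := by
    constructor
    · rintro ⟨hne, m, hm⟩
      have : m < 3 := by
        by_contra! h
        have := Nat.mul_le_mul_left (p - 1) h
        omega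
      interval_cases m <;> omega
    · rintro (rfl | rfl)
      · exact ⟨by omega, 1, by omega⟩
      · exact ⟨by omega, 2, by omega⟩
  rw [FiniteField.sum_pow_eq_ite, ZMod.card]
  exact if_congr hdvd rfl rfl

theorem sum_zmod_smul_add_smul_pow {k B : Type*} [CommRing k] [Ring B] [Algebra k B] {p : ℕ}
    [Fact p.Prime] (ρ : ZMod p →+* k) (x y : B) :
    ∑ z : ZMod p, ρ z ^ (p - 2) • (x + ρ z • y) ^ p = -addPowComponent x y p 1 - y ^ p := by
  have hp := (Fact.out : p.Prime).two_le
  calc ∑ z : ZMod p, ρ z ^ (p - 2) • (x + ρ z • y) ^ p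
      = ∑ j ∈ range (p + 1), ρ (∑ z : ZMod p, z ^ (p - 2 + j)) • addPowComponent x y p j := by
        simp_rw [add_smul_pow_eq_sum, smul_sum, smul_smul, ← pow_add, map_sum, map_pow, sum_smul]
        exact sum_comm
    _ = ∑ j ∈ range (p + 1), if j = 1 ∨ j = p then -addPowComponent x y p j else 0 := by
        refine sum_congr rfl fun j hj ↦ ?_
        rw [ZMod.sum_pow_sub_two_add (Nat.lt_succ_iff.mp (mem_range.mp hj))]
        split_ifs <;> simp
    _ = -addPowComponent x y p 1 - y ^ p := by
        have hfilter : (range (p + 1)).filter (fun j ↦ j = 1 ∨ j = p) = {1, p} := by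
          ext j; simp only [mem_filter, mem_range, mem_insert, mem_singleton]; omega
        rw [sum_ite, sum_const_zero, add_zero, hfilter, sum_pair (by omega),
          addPowComponent_self]
        abel

theorem commutator_npow'_mem_span {k A : Type*} [CommRing k] [NonUnitalRing A] [Module k A]
    [IsScalarTower k A A] [SMulCommClass k A A] {p : ℕ} [Fact p.Prime] [CharP k p] (a v : A) :
    npow' a p * v - v * npow' a p ∈ Submodule.span k (Set.range fun b : A ↦ npow' b p) := by
  have hp := (Fact.out : p.Prime).ne_zero
  let ρ := ZMod.castHom (dvd_refl p) k
  have key : npow' a p * v - v * npow' a p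
      = -npow' (a * v - v * a) p
        - ∑ z : ZMod p, ρ z ^ (p - 2) • npow' (a + ρ z • (a * v - v * a)) p := by
    -- In the unitization `npow'` becomes an ordinary power.
    apply Unitization.inr_injective (R := k)
    change Unitization.inrNonUnitalAlgHom k A _ = Unitization.inrNonUnitalAlgHom k A _
    simp only [map_sub, map_neg, map_mul, map_sum, map_smul, map_add, map_npow',
      npow'_eq_pow _ hp]
    rw [sum_zmod_smul_add_smul_pow, addPowComponent_one_commutator]
    abel
  rw [key]
  exact sub_mem (neg_mem (Submodule.subset_span ⟨_, rfl⟩))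
    (sum_mem fun z _ ↦ Submodule.smul_mem _ _ (Submodule.subset_span ⟨_, rfl⟩))

theorem exists_nonUnitalAlgHom_Xg_eq {k : Type*} [Field k] (i : ℕ) (b : FA k) :
    ∃ φ : FA k →ₙₐ[k] FA k, φ (Xg k i) = b :=
  ⟨MonoidAlgebra.liftMagma k (FreeSemigroup.lift fun _ ↦ b), by
    simp [Xg, MonoidAlgebra.liftMagma_apply_apply]⟩

theorem Hn_one_eq_span (k : Type*) [Field k] (p : ℕ) :
    Hn k p 1 = Submodule.span k (Set.range fun b : FA k ↦ npow' b p) := by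
  rw [Hn, TSpan]
  congr 1
  ext a
  constructor
  · rintro ⟨φ, _, rfl, rfl⟩
    exact ⟨φ (Xg k 0), (map_npow' φ _ p).symm⟩
  · rintro ⟨b, rfl⟩
    obtain ⟨φ, rfl⟩ := exists_nonUnitalAlgHom_Xg_eq 0 b
    exact ⟨φ, _, rfl, (map_npow' φ _ p).symm⟩

/-- The T-space `H_1` generated by `x_1^p` is closed under commutators. -/
theorem H1_closed_under_commutator (k : Type*) [Field k] (p : ℕ) (hp : p.Prime)
    [CharP k p] :
    ∀ u ∈ Hn k p 1, ∀ v : FA k, u * v - v * u ∈ Hn k p 1 := by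
  have := Fact.mk hp
  intro u hu v
  rw [Hn_one_eq_span] at hu ⊢
  have hcomm : Submodule.span k (Set.range fun b : FA k ↦ npow' b p)
      ≤ (Submodule.span k _).comap (LinearMap.mulRight k v - LinearMap.mulLeft k v) :=
    Submodule.span_le.mpr (Set.range_subset_iff.mpr fun b ↦ commutator_npow'_mem_span b v)
  exact hcomm hu
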